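/- arXiv:2408.05573 — 8 statements merged into one kernel-verified Lean document; each statement's English description precedes it below -/
import Mathlib

section
/- Let a, b, c : ℝ → ℝ be continuous on a closed interval [p, q] with a(x)·c(x) < 0 for all x in [p, q], and suppose c(x) < 0 on [p, q]. Let λ(x) be the unique positive root of a(x) + b(x)·λ + c(x)·λ² = 0, and assume λ is differentiable with λ'(x) > 0 on (p, q). If h is a differentiable solution on (p, q) of h'(x) = a(x) + b(x)·h(x) + c(x)·h(x)² with h(x) → L > 0 as x → p⁺ and h'(x) > 0 for x near p⁺, then h(x) < λ(x) and h'(x) > 0 for all x in (p, q). -/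
open Set Filter Topology

lemma exists_lt_left {f : ℝ → ℝ} {d x p : ℝ} (hf : HasDerivAt f d x) (hd : 0 < d)
    (hp : p < x) : ∃ t ∈ Set.Ioo p x, f t < f x := by
  have hs : Filter.Tendsto (slope f x) (𝓝[≠] x) (𝓝 d) :=
    hasDerivAt_iff_tendsto_slope.mp hf
  have h1 : ∀ᶠ t in 𝓝[≠] x, 0 < slope f x t := hs.eventually (eventually_gt_nhds hd)
  have h2 : ∀ᶠ t in 𝓝[<] x, 0 < slope f x t :=
    h1.filter_mono (nhdsWithin_mono x fun t ht => ne_of_lt ht)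
  have h3 : Set.Ioo p x ∈ 𝓝[<] x := Ioo_mem_nhdsLT_of_mem ⟨hp, le_rfl⟩
  have := (h2.and (eventually_mem_set.mpr h3)).exists
  obtain ⟨t, ht1, ht2⟩ := this
  refine ⟨t, ht2, ?_⟩
  have htx : t - x < 0 := sub_neg.mpr ht2.2
  have : slope f x t = (f t - f x) / (t - x) := by
    simp [slope, vsub_eq_sub, div_eq_inv_mul]
  rw [this] at ht1
  rcases div_pos_iff.mp ht1 with ⟨_, hpos⟩ | ⟨hneg, _⟩
  · linarith
  · linarith

theorem riccati_bound_case1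
    (p q : ℝ) (hpq : p < q) (a b c : ℝ → ℝ)
    (ha : ContinuousOn a (Set.Icc p q))
    (hb : ContinuousOn b (Set.Icc p q))
    (hc : ContinuousOn c (Set.Icc p q))
    (hac : ∀ x ∈ Set.Icc p q, a x * c x < 0)
    (hcneg : ∀ x ∈ Set.Icc p q, c x < 0)
    (lam lam' : ℝ → ℝ)
    (hlam_pos : ∀ x ∈ Set.Icc p q, 0 < lam x)
    (hlam_root : ∀ x ∈ Set.Icc p q, a x + b x * lam x + c x * (lam x)^2 = 0)
    (hlam_unique : ∀ x ∈ Set.Icc p q, ∀ y : ℝ, 0 < y →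
      a x + b x * y + c x * y^2 = 0 → y = lam x)
    (hlam_deriv : ∀ x ∈ Set.Ioo p q, HasDerivAt lam (lam' x) x)
    (hlam_inc : ∀ x ∈ Set.Ioo p q, 0 < lam' x)
    (h h' : ℝ → ℝ)
    (hderiv : ∀ x ∈ Set.Ioo p q, HasDerivAt h (h' x) x)
    (hode : ∀ x ∈ Set.Ioo p q, h' x = a x + b x * h x + c x * (h x)^2)
    (L : ℝ) (hL : 0 < L)
    (hlim : Filter.Tendsto h (nhdsWithin p (Set.Ioi p)) (nhds L))
    (hnear : ∃ ε > 0, ∀ x ∈ Set.Ioo p (p + ε), 0 < h' x) :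
    ∀ x ∈ Set.Ioo p q, h x < lam x ∧ 0 < h' x := by
  obtain ⟨ε2, hε2, hnear'⟩ := hnear
  have hsub : Set.Ioo p q ⊆ Set.Icc p q := Set.Ioo_subset_Icc_self
  have hapos : ∀ x ∈ Set.Icc p q, 0 < a x := by
    intro x hx
    nlinarith [hac x hx, hcneg x hx]
  -- sign lemma for the quadratic
  have keypos : ∀ x ∈ Set.Icc p q, ∀ y : ℝ, 0 ≤ y → y < lam x →
      0 < a x + b x * y + c x * y^2 := by
    intro x hx y hy hylt
    have hroot := hlam_root x hx
    have hlp := hlam_pos x hx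
    have hcx := hcneg x hx
    have hax := hapos x hx
    have h1 : 0 < a x - c x * lam x * y := by
      nlinarith [mul_nonneg (mul_nonneg hlp.le hy) (neg_nonneg.mpr hcx.le)]
    have h2 : 0 < (lam x - y) * (a x - c x * lam x * y) :=
      mul_pos (sub_pos.mpr hylt) h1
    -- lam x * Q(y) = (lam x - y) * (a x - c x * lam x * y) + y * (root eq)
    nlinarith [h2, mul_pos hlp hlp]
  have keyneg : ∀ x ∈ Set.Icc p q, ∀ y : ℝ, lam x < y →
      a x + b x * y + c x * y^2 < 0 := by
    intro x hx y hylt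
    have hroot := hlam_root x hx
    have hlp := hlam_pos x hx
    have hcx := hcneg x hx
    have hax := hapos x hx
    have hy : 0 < y := lt_trans hlp hylt
    have h1 : 0 < a x - c x * lam x * y := by
      nlinarith [mul_nonneg (mul_nonneg hlp.le hy.le) (neg_nonneg.mpr hcx.le)]
    have h2 : (y - lam x) * (a x - c x * lam x * y) > 0 :=
      mul_pos (sub_pos.mpr hylt) h1
    nlinarith [h2]
  -- if Q(y) > 0 and y > 0 then y < lam
  have keylt : ∀ x ∈ Set.Icc p q, ∀ y : ℝ, 0 < y →
      0 < a x + b x * y + c x * y^2 → y < lam x := by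
    intro x hx y hy hQ
    by_contra hcon
    push_neg at hcon
    rcases lt_or_eq_of_le hcon with hlt | heq
    · linarith [keyneg x hx y hlt]
    · have := hlam_root x hx
      rw [← heq] at hQ
      linarith
  -- positivity of h near p
  have hev : ∀ᶠ x in 𝓝[>] p, 0 < h x := hlim.eventually (eventually_gt_nhds hL)
  obtain ⟨u1, hu1, hu1sub⟩ := mem_nhdsGT_iff_exists_Ioo_subset.mp hev
  -- the good neighborhood
  set m : ℝ := min u1 (min (p + ε2) q) with hm_def
  have hpm : p < m := lt_min hu1 (lt_min (by linarith) hpq)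
  have good_near : ∀ x ∈ Set.Ioo p m, 0 < h x ∧ h x < lam x := by
    intro x hx
    have hxq : x ∈ Set.Ioo p q := ⟨hx.1, lt_of_lt_of_le hx.2 (le_trans (min_le_right _ _) (min_le_right _ _))⟩
    have hhx : 0 < h x := hu1sub ⟨hx.1, lt_of_lt_of_le hx.2 (min_le_left _ _)⟩
    have hhx' : 0 < h' x := hnear' x ⟨hx.1, lt_of_lt_of_le hx.2 (le_trans (min_le_right _ _) (min_le_left _ _))⟩
    have hQ : 0 < a x + b x * h x + c x * (h x)^2 := by rw [← hode x hxq]; exact hhx'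
    exact ⟨hhx, keylt x (hsub hxq) (h x) hhx hQ⟩
  -- main claim
  have main : ∀ x ∈ Set.Ioo p q, 0 < h x ∧ h x < lam x := by
    by_contra hbad
    push_neg at hbad
    obtain ⟨x1, hx1, hx1bad⟩ := hbad
    set B : Set ℝ := {x | x ∈ Set.Ioo p q ∧ ¬(0 < h x ∧ h x < lam x)} with hB_def
    have hx1B : x1 ∈ B := ⟨hx1, fun hP => (not_lt.mpr (hx1bad hP.1)) hP.2⟩
    have hBne : B.Nonempty := ⟨x1, hx1B⟩
    have hBbdd : BddBelow B := ⟨p, fun x hx => le_of_lt hx.1.1⟩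
    set x0 : ℝ := sInf B with hx0_def
    have hlbB : ∀ x ∈ B, m ≤ x := by
      intro x hx
      by_contra hcon
      push_neg at hcon
      exact hx.2 (good_near x ⟨hx.1.1, hcon⟩)
    have hx0m : m ≤ x0 := le_csInf hBne hlbB
    have hx0p : p < x0 := lt_of_lt_of_le hpm hx0m
    have hx0le : x0 ≤ x1 := csInf_le hBbdd hx1B
    have hx0q : x0 < q := lt_of_le_of_lt hx0le hx1.2
    have hx0 : x0 ∈ Set.Ioo p q := ⟨hx0p, hx0q⟩
    have hPbelow : ∀ t ∈ Set.Ioo p x0, 0 < h t ∧ h t < lam t := by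
      intro t ht
      by_contra hcon
      have htB : t ∈ B := ⟨⟨ht.1, lt_trans ht.2 hx0q⟩, hcon⟩
      exact absurd (csInf_le hBbdd htB) (not_le.mpr ht.2)
    have hhc : ContinuousAt h x0 := (hderiv x0 hx0).continuousAt
    have hlc : ContinuousAt lam x0 := (hlam_deriv x0 hx0).continuousAt
    have hIooMem : Set.Ioo p x0 ∈ 𝓝[<] x0 := Ioo_mem_nhdsLT_of_mem ⟨hx0p, le_rfl⟩
    have hhleft : Filter.Tendsto h (𝓝[<] x0) (𝓝 (h x0)) := hhc.continuousWithinAt.tendsto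
    have hgleft : Filter.Tendsto (fun t => lam t - h t) (𝓝[<] x0) (𝓝 (lam x0 - h x0)) :=
      (hlc.sub hhc).continuousWithinAt.tendsto
    have h0le : 0 ≤ h x0 := by
      refine ge_of_tendsto hhleft ?_
      filter_upwards [hIooMem] with t ht
      exact (hPbelow t ht).1.le
    have hlle : h x0 ≤ lam x0 := by
      have : 0 ≤ lam x0 - h x0 := by
        refine ge_of_tendsto hgleft ?_
        filter_upwards [hIooMem] with t ht
        exact (sub_pos.mpr (hPbelow t ht).2).le
      linarith
    by_cases hP0 : 0 < h x0 ∧ h x0 < lam x0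
    · -- P holds at x0: propagate, contradicting inf
      have e1 : ∀ᶠ t in 𝓝 x0, 0 < h t := hhc.eventually_const_lt hP0.1
      have e2 : ∀ᶠ t in 𝓝 x0, 0 < lam t - h t :=
        (hlc.sub hhc).eventually_const_lt (sub_pos.mpr hP0.2)
      obtain ⟨δ, hδ, hball⟩ := Metric.eventually_nhds_iff.mp (e1.and e2)
      have hlbB' : ∀ x ∈ B, x0 + δ ≤ x := by
        intro x hx
        by_contra hcon
        push_neg at hcon
        have hPx : 0 < h x ∧ h x < lam x := by
          rcases lt_or_ge x x0 with hlt | hge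
          · exact hPbelow x ⟨hx.1.1, hlt⟩
          · have : dist x x0 < δ := by
              rw [Real.dist_eq, abs_of_nonneg (by linarith)]
              linarith
            obtain ⟨g1, g2⟩ := hball this
            exact ⟨g1, by linarith⟩
        exact hx.2 hPx
      have : x0 + δ ≤ x0 := le_csInf hBne hlbB'
      linarith
    · -- P fails at x0
      rcases le_or_gt (h x0) 0 with hle0 | hgt0
      · -- h x0 = 0
        have hh0 : h x0 = 0 := le_antisymm hle0 h0le
        have hd : 0 < h' x0 := by
          rw [hode x0 hx0, hh0]
          have := hapos x0 (hsub hx0)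
          simpa using this
        obtain ⟨t, ht, hlt⟩ := exists_lt_left (hderiv x0 hx0) hd hx0p
        rw [hh0] at hlt
        exact absurd (hPbelow t ht).1 (not_lt.mpr hlt.le)
      · -- h x0 = lam x0
        have heq : h x0 = lam x0 := by
          rcases lt_or_eq_of_le hlle with hlt | heq
          · exact absurd ⟨hgt0, hlt⟩ hP0
          · exact heq
        have hd0 : h' x0 = 0 := by
          rw [hode x0 hx0, heq]
          exact hlam_root x0 (hsub hx0)
        have hgd : HasDerivAt (fun t => lam t - h t) (lam' x0 - h' x0) x0 :=
          (hlam_deriv x0 hx0).sub (hderiv x0 hx0)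
        have hgdpos : 0 < lam' x0 - h' x0 := by
          rw [hd0]; simpa using hlam_inc x0 hx0
        obtain ⟨t, ht, hlt⟩ := exists_lt_left hgd hgdpos hx0p
        have : lam x0 - h x0 = 0 := by rw [heq]; ring
        rw [this] at hlt
        exact absurd (sub_pos.mpr (hPbelow t ht).2) (not_lt.mpr hlt.le)
  intro x hx
  obtain ⟨hpos, hlt⟩ := main x hx
  refine ⟨hlt, ?_⟩
  rw [hode x hx]
  exact keypos x (hsub hx) (h x) hpos.le hlt
end

section
/- Let P : ℝ × ℝ → ℝ be continuous on (p, q) × ℝ, let φ be a differentiable solution of φ'(x) = P(x, φ(x)) on (p, q) that is bounded on every compact subset of (p, q), and let λ be differentiable on (p, q). Set δ(x) = λ(x) − φ(x) and Δ(x) = λ'(x) − P(x, λ(x)). If there exists ε > 0 with δ(x) > 0 for all x in (p, p+ε), and Δ(x) > 0 for all x in (p, q), then δ(x) > 0 for all x in (p, q). -/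
theorem ode_comparison
    (p q : ℝ) (hpq : p < q) (P : ℝ × ℝ → ℝ)
    (hP : ContinuousOn P (Set.Ioo p q ×ˢ (Set.univ : Set ℝ)))
    (φ lam lam' : ℝ → ℝ)
    (hφ : ∀ x ∈ Set.Ioo p q, HasDerivAt φ (P (x, φ x)) x)
    (hbdd : ∀ K : Set ℝ, K ⊆ Set.Ioo p q → IsCompact K → ∃ M : ℝ, ∀ x ∈ K, |φ x| ≤ M)
    (hlam : ∀ x ∈ Set.Ioo p q, HasDerivAt lam (lam' x) x)
    (hδ : ∃ ε > 0, ∀ x ∈ Set.Ioo p (p + ε), 0 < lam x - φ x)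
    (hΔ : ∀ x ∈ Set.Ioo p q, 0 < lam' x - P (x, lam x)) :
    ∀ x ∈ Set.Ioo p q, 0 < lam x - φ x := by
  obtain ⟨ε, hε, hδε⟩ := hδ
  intro b hb
  by_contra hcon
  push_neg at hcon
  set δ : ℝ → ℝ := fun x => lam x - φ x with hδdef
  have hδd : ∀ x ∈ Set.Ioo p q, HasDerivAt δ (lam' x - P (x, φ x)) x :=
    fun x hx => (hlam x hx).sub (hφ x hx)
  have hδc : ContinuousOn δ (Set.Ioo p q) :=
    fun x hx => ((hδd x hx).continuousAt).continuousWithinAt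
  set a := p + min ε (b - p) / 2 with ha
  have hmin : 0 < min ε (b - p) := lt_min hε (by linarith [hb.1])
  have hpa : p < a := by simp only [ha]; linarith
  have hab : a < b := by
    have h1 : min ε (b - p) ≤ b - p := min_le_right _ _
    simp only [ha]; linarith
  have hbq : b < q := hb.2
  have hsub : Set.Icc a b ⊆ Set.Ioo p q :=
    fun y hy => ⟨lt_of_lt_of_le hpa hy.1, lt_of_le_of_lt hy.2 hbq⟩
  have hδa : 0 < δ a := by
    refine hδε a ⟨hpa, ?_⟩
    have h1 : min ε (b - p) ≤ ε := min_le_left _ _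
    simp only [ha]; linarith
  set S := Set.Icc a b ∩ δ ⁻¹' Set.Iic 0 with hS
  have hbS : b ∈ S := ⟨⟨le_of_lt hab, le_refl b⟩, hcon⟩
  have hSne : S.Nonempty := ⟨b, hbS⟩
  have hSbdd : BddBelow S := ⟨a, fun y hy => hy.1.1⟩
  have hSclosed : IsClosed S :=
    (hδc.mono hsub).preimage_isClosed_of_isClosed isClosed_Icc isClosed_Iic
  set c := sInf S with hc
  have hcS : c ∈ S := hSclosed.csInf_mem hSne hSbdd
  have hlb : ∀ y ∈ S, c ≤ y := fun y hy => csInf_le hSbdd hy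
  have hac : a < c := by
    rcases lt_or_eq_of_le hcS.1.1 with h | h
    · exact h
    · exfalso
      have h2 : δ c ≤ 0 := hcS.2
      rw [← h] at h2; linarith
  have hcmem : c ∈ Set.Ioo p q := hsub hcS.1
  have hδc0 : δ c = 0 := by
    have hle : δ c ≤ 0 := hcS.2
    rcases lt_or_eq_of_le hle with h | h
    · exfalso
      have hsub2 : Set.Icc a c ⊆ Set.Ioo p q :=
        fun y hy => hsub ⟨hy.1, le_trans hy.2 hcS.1.2⟩
      have hIVT := intermediate_value_Ioo' (le_of_lt hac) (hδc.mono hsub2)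
      obtain ⟨z, hz, hz0⟩ := hIVT (⟨h, hδa⟩ : (0:ℝ) ∈ Set.Ioo (δ c) (δ a))
      have hzS : z ∈ S :=
        ⟨⟨le_of_lt hz.1, le_trans (le_of_lt hz.2) hcS.1.2⟩, le_of_eq hz0⟩
      linarith [hlb z hzS, hz.2]
    · exact h
  have hder : HasDerivAt δ (lam' c - P (c, lam c)) c := by
    have h1 := hδd c hcmem
    have heq : φ c = lam c := by
      have : lam c - φ c = 0 := hδc0
      linarith
    rwa [heq] at h1
  have hpos := hΔ c hcmem
  have hslope := hasDerivAt_iff_tendsto_slope.mp hder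
  have hev : ∀ᶠ x in nhdsWithin c {c}ᶜ, 0 < slope δ c x :=
    hslope (eventually_gt_nhds hpos)
  have hev2 : ∀ᶠ x in nhdsWithin c (Set.Iio c), 0 < slope δ c x :=
    hev.filter_mono (nhdsWithin_mono c (fun y hy => ne_of_lt hy))
  have hmem : Set.Ioo a c ∈ nhdsWithin c (Set.Iio c) :=
    Ioo_mem_nhdsLT_of_mem ⟨hac, le_refl c⟩
  obtain ⟨x, hx1, hx2⟩ := (hev2.and (Filter.eventually_of_mem hmem (fun y hy => hy))).exists
  -- hx1 : 0 < slope δ c x, hx2 : x ∈ Set.Ioo a c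
  have hxc : x - c < 0 := by linarith [hx2.2]
  have hslope_eq : slope δ c x = (δ x - δ c) / (x - c) := by
    rw [slope_def_field]
  rw [hslope_eq, hδc0, sub_zero] at hx1
  have hδx : δ x < 0 := by
    rcases div_pos_iff.mp hx1 with ⟨h1, h2⟩ | ⟨h1, h2⟩
    · linarith
    · linarith
  have hxS : x ∈ S :=
    ⟨⟨le_of_lt hx2.1, le_trans (le_of_lt hx2.2) hcS.1.2⟩, le_of_lt hδx⟩
  linarith [hlb x hxS, hx2.2]
end

section
/- Let n > −1/2 and define λₙ(x) = ((n + 5/2)·x + (n + 1/2)·√(x² + 4n + 6)) / (2(n + 3/2)) and Δ(x) = λₙ'(x) − (λₙ(x)² − x·λₙ(x) − (n − 1/2)). Then Δ(x) > 0 for all real x. -/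
theorem pcf_defect_positive (n : ℝ) (hn : -(1/2) < n)
    (lam : ℝ → ℝ)
    (hlam : ∀ x : ℝ, lam x =
      ((n + 5/2)*x + (n + 1/2)*Real.sqrt (x^2 + 4*n + 6)) / (2*(n + 3/2))) :
    ∀ x : ℝ, 0 < deriv lam x - ((lam x)^2 - x * lam x - (n - 1/2)) := by
  have hfun : lam = fun x => ((n + 5/2)*x + (n + 1/2)*Real.sqrt (x^2 + 4*n + 6)) / (2*(n + 3/2)) :=
    funext hlam
  intro x
  have h2n3 : (0:ℝ) < 2*n+3 := by linarith
  have hpos : 0 < x^2 + 4*n + 6 := by nlinarith [sq_nonneg x]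
  set s := Real.sqrt (x^2 + 4*n + 6) with hs
  clear_value s
  have hs0 : 0 < s := hs ▸ Real.sqrt_pos.mpr hpos
  have hs2 : s^2 = x^2 + 4*n + 6 := hs ▸ Real.sq_sqrt hpos.le
  have hsne : s ≠ 0 := ne_of_gt hs0
  have h2n3' : (2*n+3) ≠ 0 := ne_of_gt h2n3
  have hne : (n + 3/2) ≠ 0 := by intro h; nlinarith
  have hne2 : (2*(n + 3/2)) ≠ 0 := by intro h; nlinarith
  have hne3 : (6 + n*4) ≠ 0 := by intro h; nlinarith
  have hd : HasDerivAt lam (((n + 5/2) + (n + 1/2)*(x/s)) / (2*(n + 3/2))) x := by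
    rw [hfun]
    have h1 : HasDerivAt (fun x : ℝ => x^2 + 4*n + 6) (2*x) x := by
      simpa [add_assoc] using ((hasDerivAt_pow 2 x).add_const (4*n+6))
    have h2 : HasDerivAt (fun x : ℝ => Real.sqrt (x^2 + 4*n + 6))
        ((2*x)/(2*Real.sqrt (x^2 + 4*n + 6))) x := h1.sqrt (ne_of_gt hpos)
    have h3 := (((hasDerivAt_id x).const_mul (n+5/2)).add (h2.const_mul (n+1/2))).div_const (2*(n+3/2))
    have hx : 2*x/(2*Real.sqrt (x^2 + 4*n + 6)) = x/s := by
      rw [← hs, mul_div_mul_left _ _ (two_ne_zero)]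
    simpa [hx] using h3
  have hL : (2*n+3) * lam x = (n+5/2)*x + (n+1/2)*s := by
    rw [hlam x, ← hs, ← mul_div_assoc, div_eq_iff hne2]; ring
  have hD : ((2*n+3)*s) * deriv lam x = (n+5/2)*s + (n+1/2)*x := by
    rw [hd.deriv, ← mul_div_assoc, div_eq_iff hne2]
    field_simp
  have hc : (0:ℝ) < (2*n+3)^2 * s := by positivity
  have htpos : (0:ℝ) < 2*x^2+2*n+3 := by nlinarith [sq_nonneg x]
  have h1 : 0 < s*(2*x^2+2*n+3) := mul_pos hs0 htpos
  have key : 0 < (n+1/2) * (s*(2*x^2+2*n+3) - x*(2*x^2+6*n+9)) := by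
    have h2 : 0 < s*(2*x^2+2*n+3) - x*(2*x^2+6*n+9) := by
      by_contra hcon
      push_neg at hcon
      have hAB : s*(2*x^2+2*n+3) ≤ x*(2*x^2+6*n+9) := by linarith
      have hsq := mul_self_le_mul_self h1.le hAB
      have hid : (s*(2*x^2+2*n+3))^2 - (x*(2*x^2+6*n+9))^2 = 2*(2*n+3)^3 := by
        linear_combination (2*x^2+2*n+3)^2 * hs2
      nlinarith [pow_pos h2n3 3]
    have hn2 : (0:ℝ) < n + 1/2 := by linarith
    exact mul_pos hn2 h2
  have hE : (deriv lam x - ((lam x)^2 - x * lam x - (n - 1/2))) * ((2*n+3)^2 * s)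
      = (n+1/2) * (s*(2*x^2+2*n+3) - x*(2*x^2+6*n+9)) := by
    linear_combination (2*n+3) * hD
      - (s*((2*n+3)*lam x + ((n+5/2)*x+(n+1/2)*s)) - x*(2*n+3)*s) * hL
      + (-(n+1/2)^2*s - (2*n+1)*x) * hs2
  nlinarith [key, hc, hE]
end

section
/- Let a, b > 0 and x > 0, and define λ(a,b,x) = (x − b + √((x − b)² + 4ax))/(2x) and λ̃(a,b,x) = 2a / (b − x − 1 + √((x − b − 1)² + 4(a+1)x)). If b > a then λ̃(a,b,x) < λ(a,b,x); if b < a the inequality is reversed; if a = b then λ̃(a,b,x) = λ(a,b,x) = a/b. -/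
theorem kummer_bounds_ordered (a b x : ℝ) (ha : 0 < a) (hb : 0 < b) (hx : 0 < x) :
    (a < b →
      2*a / (b - x - 1 + Real.sqrt ((x - b - 1)^2 + 4*(a + 1)*x))
        < (x - b + Real.sqrt ((x - b)^2 + 4*a*x)) / (2*x)) ∧
    (b < a →
      (x - b + Real.sqrt ((x - b)^2 + 4*a*x)) / (2*x)
        < 2*a / (b - x - 1 + Real.sqrt ((x - b - 1)^2 + 4*(a + 1)*x))) ∧
    (a = b →
      2*a / (b - x - 1 + Real.sqrt ((x - b - 1)^2 + 4*(a + 1)*x)) = a/b ∧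
      (x - b + Real.sqrt ((x - b)^2 + 4*a*x)) / (2*x) = a/b) := by
  set S := Real.sqrt ((x - b)^2 + 4*a*x) with hSdef
  set T := Real.sqrt ((x - b - 1)^2 + 4*(a + 1)*x) with hTdef
  have hS0 : 0 ≤ S := Real.sqrt_nonneg _
  have hT0 : 0 ≤ T := Real.sqrt_nonneg _
  have hS2 : S^2 = (x - b)^2 + 4*a*x := Real.sq_sqrt (by nlinarith)
  have hT2 : T^2 = (x - b - 1)^2 + 4*(a + 1)*x := Real.sq_sqrt (by nlinarith)
  have hSpos : 0 < S := by
    rw [hSdef]; exact Real.sqrt_pos.mpr (by nlinarith)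
  have hd : 0 < b - x - 1 + T := by
    by_contra h
    push_neg at h
    have hT' : T ≤ x + 1 - b := by linarith
    have : T * T ≤ (x + 1 - b) * (x + 1 - b) :=
      mul_le_mul hT' hT' hT0 (by linarith)
    nlinarith
  set d := b - x - 1 + T with hddef
  have hSd : 0 < S * d := mul_pos hSpos hd
  have hS2d : S^2 * d^2 = ((x - b)^2 + 4*a*x) * d^2 := by rw [hS2]
  have hAB : ((x - b + S)*d - 4*a*x) * (S*d - (x - b)*d + 4*a*x)
      = 4*a*x*(d^2 + 2*(x - b)*d - 4*a*x) := by
    linear_combination d^2 * hS2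
  have hkey : d^2 + 2*(x - b)*d - 4*a*x = 2*(x + b + 1 - T) := by
    rw [hddef]; linear_combination hT2
  refine ⟨?_, ?_, ?_⟩
  · -- a < b
    intro hab
    have hTlt : T < x + b + 1 := by nlinarith
    have hC : 0 < d^2 + 2*(x - b)*d - 4*a*x := by rw [hkey]; linarith
    rw [div_lt_div_iff₀ hd (by positivity)]
    -- goal: 2*a*(2*x) < (x - b + S) * d
    rcases le_or_gt (4*a*x - (x - b)*d) 0 with hcase | hcase
    · nlinarith [hSd]
    · have hB : 0 < S*d - (x - b)*d + 4*a*x := by linarith [hSd]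
      have h4C : 0 < 4*a*x * (d^2 + 2*(x - b)*d - 4*a*x) :=
        mul_pos (by positivity) hC
      by_contra h
      push_neg at h
      have hA : (x - b + S)*d - 4*a*x ≤ 0 := by linarith
      have := mul_nonpos_iff.mpr (Or.inr ⟨hA, hB.le⟩)
      linarith [hAB, this]
  · -- b < a
    intro hab
    have hTgt : x + b + 1 < T := by nlinarith
    have hC : d^2 + 2*(x - b)*d - 4*a*x < 0 := by rw [hkey]; linarith
    rw [div_lt_div_iff₀ (by positivity) hd]
    -- goal: (x - b + S) * d < 2*a*(2*x)
    have hud : (x - b)*d < 4*a*x := by nlinarith [sq_nonneg d]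
    have hB : 0 < S*d - (x - b)*d + 4*a*x := by linarith [hSd]
    have h4C : 4*a*x * (d^2 + 2*(x - b)*d - 4*a*x) < 0 :=
      mul_neg_of_pos_of_neg (by positivity) hC
    by_contra h
    push_neg at h
    have hA : 0 ≤ (x - b + S)*d - 4*a*x := by linarith
    have := mul_nonneg hA hB.le
    linarith [hAB, this]
  · -- a = b
    intro hab
    subst hab
    have hT : T = x + a + 1 := by
      rw [hTdef, show (x - a - 1)^2 + 4*(a + 1)*x = (x + a + 1)^2 by ring,
        Real.sqrt_sq (by positivity)]
    have hS : S = x + a := by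
      rw [hSdef, show (x - a)^2 + 4*a*x = (x + a)^2 by ring,
        Real.sqrt_sq (by positivity)]
    constructor
    · rw [hddef, hT]
      rw [show a - x - 1 + (x + a + 1) = 2*a by ring]
      rw [div_self (by positivity)]
      field_simp
    · rw [hS, div_self (by positivity)]
      field_simp
      ring
end

section
/- Let a, b, c > 0 with c > ab/(a + b + 1), and define φ(x) = c − (a + b + 1)x + √(((a + b + 1)x − c)² + 4abx(1 − x)) for x ∈ [0, 1). Then φ(x) > 0 on [0, 1), φ(0) = 2c, φ'(0) = 2(ab/c − (a + b + 1)) < 0, and φ is strictly decreasing on [0, 1). -/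
theorem gauss_phi_decreasing (a b c : ℝ) (ha : 0 < a) (hb : 0 < b) (hc : 0 < c)
    (hcab : a*b/(a + b + 1) < c)
    (φ : ℝ → ℝ)
    (hφ : ∀ x : ℝ, φ x = c - (a + b + 1)*x
      + Real.sqrt (((a + b + 1)*x - c)^2 + 4*a*b*x*(1 - x))) :
    (∀ x ∈ Set.Ico (0:ℝ) 1, 0 < φ x) ∧
    φ 0 = 2*c ∧
    deriv φ 0 = 2*(a*b/c - (a + b + 1)) ∧
    2*(a*b/c - (a + b + 1)) < 0 ∧
    StrictAntiOn φ (Set.Ico 0 1) := by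
  have hφ' : φ = fun x => c - (a + b + 1)*x
      + Real.sqrt (((a + b + 1)*x - c)^2 + 4*a*b*x*(1 - x)) := funext hφ
  subst hφ'
  have hs : (0:ℝ) < a + b + 1 := by linarith
  have hab : 0 < a*b := mul_pos ha hb
  have hscab : a*b < c*(a+b+1) := by
    rw [div_lt_iff₀ hs] at hcab; linarith
  set q : ℝ → ℝ := fun x => ((a + b + 1)*x - c)^2 + 4*a*b*x*(1 - x) with hqdef
  have hqpos : ∀ x ∈ Set.Ico (0:ℝ) 1, 0 < q x := by
    intro x hx
    rcases eq_or_lt_of_le hx.1 with h0 | h0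
    · simp only [hqdef, ← h0]
      have : ((a + b + 1)*0 - c)^2 + 4*a*b*0*(1 - 0) = c^2 := by ring
      rw [this]; positivity
    · have h1 : 0 < 4*a*b*x*(1-x) := by
        have := hx.2
        have : (0:ℝ) < 1 - x := by linarith
        positivity
      have := sq_nonneg ((a+b+1)*x - c)
      simp only [hqdef]
      nlinarith
  -- derivative of φ wherever q x > 0
  have hderiv : ∀ x : ℝ, 0 < q x → HasDerivAt
      (fun x => c - (a + b + 1)*x
        + Real.sqrt (((a + b + 1)*x - c)^2 + 4*a*b*x*(1 - x)))
      (-(a+b+1) + (2*(a+b+1)*((a+b+1)*x-c) + 4*a*b*(1-2*x)) / (2*Real.sqrt (q x))) x := by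
    intro x hx
    have h1 : HasDerivAt (fun y : ℝ => (a+b+1)*y - c) (a+b+1) x := by
      simpa using ((hasDerivAt_id x).const_mul (a+b+1)).sub_const c
    have h2 : HasDerivAt (fun y : ℝ => ((a+b+1)*y - c)^2) (2*(a+b+1)*((a+b+1)*x - c)) x := by
      have := h1.pow 2
      refine this.congr_deriv ?_
      ring
    have h3 : HasDerivAt (fun y : ℝ => 4*a*b*y*(1-y)) (4*a*b*(1-2*x)) x := by
      have hy : HasDerivAt (fun y : ℝ => y*(1-y)) (1*(1-x) + x*(-1)) x :=
        (hasDerivAt_id x).mul ((hasDerivAt_id x).const_sub 1)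
      have := hy.const_mul (4*a*b)
      refine (this.congr_deriv ?_).congr_of_eventuallyEq (Filter.Eventually.of_forall fun y => ?_)
      · ring
      · ring
    have hq' : HasDerivAt q (2*(a+b+1)*((a+b+1)*x - c) + 4*a*b*(1-2*x)) x := h2.add h3
    have hsq : HasDerivAt (fun y => Real.sqrt (q y))
        ((2*(a+b+1)*((a+b+1)*x - c) + 4*a*b*(1-2*x)) / (2*Real.sqrt (q x))) x :=
      hq'.sqrt (ne_of_gt hx)
    have hlin : HasDerivAt (fun y : ℝ => c - (a+b+1)*y) (-(a+b+1)) x := by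
      simpa using ((hasDerivAt_id x).const_mul (a+b+1)).const_sub c
    exact hlin.add hsq
  have hq0 : q 0 = c^2 := by simp only [hqdef]; ring
  have hsq0 : Real.sqrt (q 0) = c := by rw [hq0, Real.sqrt_sq hc.le]
  -- deriv at 0
  have hd0 : deriv (fun x => c - (a + b + 1)*x
        + Real.sqrt (((a + b + 1)*x - c)^2 + 4*a*b*x*(1 - x))) 0
      = 2*(a*b/c - (a + b + 1)) := by
    have h := (hderiv 0 (by rw [hq0]; positivity)).deriv
    rw [h, hsq0]
    field_simp
    ring
  -- deriv negative on (0,1)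
  have hdneg : ∀ x ∈ Set.Ioo (0:ℝ) 1, deriv (fun x => c - (a + b + 1)*x
        + Real.sqrt (((a + b + 1)*x - c)^2 + 4*a*b*x*(1 - x))) x < 0 := by
    intro x hx
    have hqx : 0 < q x := hqpos x ⟨hx.1.le, hx.2⟩
    have hsqx : 0 < Real.sqrt (q x) := Real.sqrt_pos.mpr hqx
    rw [(hderiv x hqx).deriv]
    set M : ℝ := 2*(a+b+1)*((a+b+1)*x - c) + 4*a*b*(1-2*x) with hM
    have key : M < 2*(a+b+1)*Real.sqrt (q x) := by
      rcases le_or_gt M 0 with hMn | hMp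
      · have : 0 < 2*(a+b+1)*Real.sqrt (q x) := by positivity
        linarith
      · -- square both sides
        have hM2 : M^2 < (2*(a+b+1))^2 * q x := by
          simp only [hM, hqdef]
          nlinarith [mul_pos (mul_pos hab hx.1) hMp,
            mul_pos hab (mul_pos (sub_pos.mpr hscab) (sub_pos.mpr hx.2)),
            mul_pos (mul_pos hab hab) hx.1, sq_nonneg ((a+b+1)*x - c)]
        have hdiv : M / (2*(a+b+1)) < Real.sqrt (q x) := by
          rw [Real.lt_sqrt (by positivity)]
          rw [div_pow]
          rw [div_lt_iff₀ (by positivity)]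
          calc M^2 < (2*(a+b+1))^2 * q x := hM2
            _ = q x * (2*(a+b+1))^2 := by ring
        calc M = (M / (2*(a+b+1))) * (2*(a+b+1)) := by field_simp
          _ < Real.sqrt (q x) * (2*(a+b+1)) := by
              apply mul_lt_mul_of_pos_right hdiv (by positivity)
          _ = 2*(a+b+1)*Real.sqrt (q x) := by ring
    have : M / (2*Real.sqrt (q x)) < (a+b+1) := by
      rw [div_lt_iff₀ (by positivity)]
      linarith
    linarith
  refine ⟨?_, ?_, ?_, ?_, ?_⟩
  · -- positivity
    intro x hx
    have hqx : 0 < q x := hqpos x hx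
    rcases eq_or_lt_of_le hx.1 with h0 | h0
    · simp only [← h0]
      have h1 : ((a + b + 1)*0 - c)^2 + 4*a*b*0*(1 - 0) = c^2 := by ring
      rw [h1, Real.sqrt_sq hc.le]
      linarith
    · have h1 : 0 < 4*a*b*x*(1-x) := by
        have h2 : (0:ℝ) < 1 - x := by linarith [hx.2]
        positivity
      have habs : |(a + b + 1)*x - c| < Real.sqrt (q x) := by
        rw [← Real.sqrt_sq_eq_abs]
        apply Real.sqrt_lt_sqrt (sq_nonneg _)
        simp only [hqdef]; linarith
      have := le_abs_self ((a + b + 1)*x - c)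
      simp only [hqdef] at habs ⊢
      linarith
  · -- φ 0
    simp only
    have h1 : ((a + b + 1)*0 - c)^2 + 4*a*b*0*(1 - 0) = c^2 := by ring
    rw [h1, Real.sqrt_sq hc.le]
    ring
  · exact hd0
  · have h1 : a*b/c < a+b+1 := (div_lt_iff₀ hc).mpr (by linarith)
    linarith
  · apply strictAntiOn_of_deriv_neg (convex_Ico 0 1)
    · apply Continuous.continuousOn
      have : Continuous fun x : ℝ => ((a + b + 1)*x - c)^2 + 4*a*b*x*(1 - x) := by fun_prop
      exact (by fun_prop : Continuous fun x : ℝ => c - (a + b + 1)*x).add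
        (Real.continuous_sqrt.comp this)
    · rw [interior_Ico]
      exact hdneg
end

section
/- For a, b, c > 0 and x ∈ [0, 1), the second derivative of φ(x) = c − (a+b+1)x + √(((a+b+1)x − c)² + 4abx(1−x)) equals 4ab·((a+b+1)c − ab − c²) / (((a+b+1)x − c)² + 4abx(1−x))^{3/2}. In particular φ'' has constant sign on [0,1), equal to the sign of (a+b+1)c − ab − c², and if c ≥ a + b + 1 then φ''(x) < 0 on [0, 1). -/
theorem gauss_phi_second_deriv (a b c : ℝ) (ha : 0 < a) (hb : 0 < b) (hc : 0 < c)
    (φ : ℝ → ℝ)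
    (hφ : ∀ x : ℝ, φ x = c - (a + b + 1)*x
      + Real.sqrt (((a + b + 1)*x - c)^2 + 4*a*b*x*(1 - x))) :
    (∀ x ∈ Set.Ico (0:ℝ) 1,
      deriv (deriv φ) x = 4*a*b*((a + b + 1)*c - a*b - c^2)
        / (((a + b + 1)*x - c)^2 + 4*a*b*x*(1 - x)) ^ ((3:ℝ)/2)) ∧
    (a + b + 1 ≤ c → ∀ x ∈ Set.Ico (0:ℝ) 1, deriv (deriv φ) x < 0) := by
  set A : ℝ := (a+b+1)^2 - 4*a*b with hA
  set B : ℝ := 4*a*b - 2*c*(a+b+1) with hB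
  set Q : ℝ → ℝ := fun x => A*x^2 + B*x + c^2 with hQ
  have hQeq : ∀ x : ℝ, ((a + b + 1)*x - c)^2 + 4*a*b*x*(1 - x) = Q x := by
    intro x; simp only [hQ, hA, hB]; ring
  have hφ' : φ = fun x => c - (a+b+1)*x + Real.sqrt (Q x) := by
    funext x; rw [hφ x, hQeq x]
  -- derivative of Q
  have hQd : ∀ x : ℝ, HasDerivAt Q (2*A*x + B) x := by
    intro x
    have h1 := (((hasDerivAt_pow 2 x).const_mul A).add
      ((hasDerivAt_id x).const_mul B)).add_const (c^2)
    have h2 : HasDerivAt Q (A * (2*x) + B*1) x := by rw [hQ]; simpa using h1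
    exact h2.congr_deriv (by ring)
  -- deriv φ on the open set where Q > 0
  set g : ℝ → ℝ := fun x => -(a+b+1) + (2*A*x + B)/(2*Real.sqrt (Q x)) with hg
  have hφd : ∀ x : ℝ, 0 < Q x → HasDerivAt φ (g x) x := by
    intro x hx
    rw [hφ']
    have hs : HasDerivAt (fun x => Real.sqrt (Q x))
        (1/(2*Real.sqrt (Q x)) * (2*A*x + B)) x :=
      (Real.hasDerivAt_sqrt (ne_of_gt hx)).comp x (hQd x)
    have h2 : HasDerivAt (fun x : ℝ => c - (a+b+1)*x + Real.sqrt (Q x))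
        (-( (a+b+1)*1) + 1/(2*Real.sqrt (Q x)) * (2*A*x + B)) x :=
      (((hasDerivAt_id x).const_mul (a+b+1)).const_sub c).add hs
    exact h2.congr_deriv (by simp [hg]; ring)
  have hUopen : IsOpen {x : ℝ | 0 < Q x} := by
    have : Continuous Q := by fun_prop
    exact isOpen_lt continuous_const this
  have hQpos : ∀ x ∈ Set.Ico (0:ℝ) 1, 0 < Q x := by
    rintro x ⟨hx0, hx1⟩
    rw [← hQeq x]
    rcases eq_or_lt_of_le hx0 with h | h
    · subst h; simp; positivity
    · have h4 : 0 < 4*a*b*x*(1-x) :=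
        mul_pos (mul_pos (mul_pos (mul_pos four_pos ha) hb) h) (by linarith)
      have := sq_nonneg ((a+b+1)*x - c)
      linarith
  have hmain : ∀ x ∈ Set.Ico (0:ℝ) 1,
      deriv (deriv φ) x = 4*a*b*((a + b + 1)*c - a*b - c^2)
        / (((a + b + 1)*x - c)^2 + 4*a*b*x*(1 - x)) ^ ((3:ℝ)/2) := by
    intro x hx
    have hQx := hQpos x hx
    have hdeq : deriv φ =ᶠ[nhds x] g := by
      filter_upwards [hUopen.mem_nhds hQx] with y hy
      exact (hφd y hy).deriv
    rw [hdeq.deriv_eq]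
    -- derivative of g at x
    set r : ℝ := Real.sqrt (Q x) with hr
    have hrpos : 0 < r := Real.sqrt_pos.mpr hQx
    have hr2 : r^2 = Q x := Real.sq_sqrt hQx.le
    have hNd : HasDerivAt (fun x : ℝ => 2*A*x + B) (2*A) x := by
      simpa using ((hasDerivAt_id x).const_mul (2*A)).add_const B
    have hDd : HasDerivAt (fun x : ℝ => 2*Real.sqrt (Q x))
        (2*(1/(2*r) * (2*A*x + B))) x :=
      ((Real.hasDerivAt_sqrt (ne_of_gt hQx)).comp x (hQd x)).const_mul 2
    have hDne : 2*Real.sqrt (Q x) ≠ 0 := by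
      have : (0:ℝ) < 2*Real.sqrt (Q x) := by rw [← hr] at *; linarith
      exact ne_of_gt this
    have hgd : HasDerivAt g
        ((2*A * (2*r) - (2*A*x + B) * (2*(1/(2*r) * (2*A*x + B)))) / (2*r)^2) x := by
      have := (hNd.div hDd hDne).const_add (-(a+b+1))
      simpa [hg, hr] using this
    rw [hgd.deriv, hQeq x]
    have hrpow : Q x ^ ((3:ℝ)/2) = Q x * r := by
      rw [show (3:ℝ)/2 = 1 + 1/2 by norm_num, Real.rpow_add hQx, Real.rpow_one,
        ← Real.sqrt_eq_rpow]
    rw [hrpow]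
    have hQr : Q x = r^2 := hr2.symm
    have key : 4*A*r^2 - (2*A*x+B)^2 = 16*a*b*((a + b + 1)*c - a*b - c^2) := by
      rw [hr2]; simp only [hQ, hA, hB]; ring
    have hrne : r ≠ 0 := ne_of_gt hrpos
    have hsimp : (2*A*(2*r) - (2*A*x+B)*(2*(1/(2*r)*(2*A*x+B))))/(2*r)^2
        = (4*A*r^2 - (2*A*x+B)^2)/(4*r^3) := by
      field_simp; ring
    rw [hsimp, hQr, show r^2*r = r^3 by ring,
      div_eq_div_iff (by positivity) (by positivity)]
    linear_combination r^3 * key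
  constructor
  · exact hmain
  · intro hcle x hx
    rw [hmain x hx]
    apply div_neg_of_neg_of_pos
    · nlinarith [mul_pos ha hb, mul_nonneg hc.le (sub_nonneg.mpr hcle)]
    · exact Real.rpow_pos_of_pos (hQeq x ▸ hQpos x hx) _
end

section
/- Let h be differentiable on (0, 1), satisfying h'(x) = −(1/(x(1−x)))·(x(1−x)h(x)² + (c − (a+b+1)x)h(x) − ab) with a, b, c > 0 and c > ab/(a+b+1). Let λ(x) = ((a+b+1)x − c + √(((a+b+1)x − c)² + 4abx(1−x)))/(2x(1−x)), and assume λ is strictly increasing on (0,1). If h(x) → ab/c > 0 as x → 0⁺ and h'(x) > 0 near 0⁺, then h(x) < λ(x) and h'(x) > 0 for all x ∈ (0, 1). -/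
open Set Filter Real

private lemma quad_lt_root {A B C y s : ℝ} (hA : 0 < A) (hs : 0 ≤ s)
    (hs2 : s^2 = B^2 - 4*A*C) (hQ : A*y^2 + B*y + C < 0) :
    y < (-B + s) / (2*A) := by
  rw [lt_div_iff₀ (by linarith)]
  nlinarith [sq_nonneg (2*A*y + B - s), sq_nonneg (2*A*y + B + s)]

private lemma quad_pos_root_eq {A B C y s : ℝ} (hA : 0 < A) (hC : C < 0) (hs : 0 ≤ s)
    (hs2 : s^2 = B^2 - 4*A*C) (hy : 0 < y) (hQ : A*y^2 + B*y + C = 0) :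
    y = (-B + s) / (2*A) := by
  have key : (2*A*y + B - s) * (2*A*y + B + s) = 0 := by linear_combination 4*A*hQ - hs2
  rcases mul_eq_zero.mp key with h1 | h2
  · field_simp
    linarith
  · exfalso
    nlinarith [mul_pos hA hy, mul_pos hA (neg_pos.mpr hC), sq_nonneg (s + B)]

set_option maxHeartbeats 1000000 in
theorem gauss_riccati_bound (a b c : ℝ) (ha : 0 < a) (hb : 0 < b) (hc : 0 < c)
    (hcab : a*b/(a + b + 1) < c)
    (h h' : ℝ → ℝ)
    (hderiv : ∀ x ∈ Set.Ioo (0:ℝ) 1, HasDerivAt h (h' x) x)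
    (hode : ∀ x ∈ Set.Ioo (0:ℝ) 1, h' x =
      -(1/(x*(1 - x))) * (x*(1 - x)*(h x)^2 + (c - (a + b + 1)*x)*h x - a*b))
    (lam : ℝ → ℝ)
    (hlam : ∀ x ∈ Set.Ioo (0:ℝ) 1, lam x =
      ((a + b + 1)*x - c + Real.sqrt (((a + b + 1)*x - c)^2 + 4*a*b*x*(1 - x)))
        / (2*x*(1 - x)))
    (hmono : StrictMonoOn lam (Set.Ioo 0 1))
    (hlim : Filter.Tendsto h (nhdsWithin 0 (Set.Ioi 0)) (nhds (a*b/c)))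
    (habc : 0 < a*b/c)
    (hnear : ∃ ε > 0, ∀ x ∈ Set.Ioo (0:ℝ) ε, 0 < h' x) :
    ∀ x ∈ Set.Ioo (0:ℝ) 1, h x < lam x ∧ 0 < h' x := by
  -- basic positivity and continuity facts
  have hApos : ∀ x ∈ Set.Ioo (0:ℝ) 1, 0 < x * (1 - x) :=
    fun x hx => mul_pos hx.1 (by linarith [hx.2])
  have hhc : ∀ x ∈ Set.Ioo (0:ℝ) 1, ContinuousAt h x := fun x hx => (hderiv x hx).continuousAt
  have hh'c : ∀ x ∈ Set.Ioo (0:ℝ) 1, ContinuousAt h' x := by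
    intro x hx
    have hxne : x * (1 - x) ≠ 0 := ne_of_gt (hApos x hx)
    have hF : ContinuousAt (fun y => -(1/(y*(1 - y))) *
        (y*(1 - y)*(h y)^2 + (c - (a + b + 1)*y)*h y - a*b)) x := by
      have hden : ContinuousAt (fun y : ℝ => y * (1 - y)) x := by fun_prop
      have hch := hhc x hx
      exact ((continuousAt_const.div hden hxne).neg).mul
        (((hden.mul (hch.pow 2)).add
          ((by fun_prop : ContinuousAt (fun y : ℝ => c - (a+b+1)*y) x).mul hch)).sub
          continuousAt_const)
    apply hF.congr
    filter_upwards [isOpen_Ioo.mem_nhds hx] with y hy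
    exact (hode y hy).symm
  have hdisc : ∀ x ∈ Set.Ioo (0:ℝ) 1,
      0 ≤ ((a + b + 1)*x - c)^2 + 4*a*b*x*(1 - x) := by
    intro x hx
    have h1 := hApos x hx
    nlinarith [sq_nonneg ((a+b+1)*x - c), mul_pos (mul_pos ha hb) h1]
  have hsqrt : ∀ x ∈ Set.Ioo (0:ℝ) 1, ∃ s : ℝ, 0 ≤ s ∧
      s^2 = ((a + b + 1)*x - c)^2 + 4*a*b*x*(1 - x) ∧
      lam x = ((a + b + 1)*x - c + s) / (2*x*(1 - x)) :=
    fun x hx => ⟨Real.sqrt _, Real.sqrt_nonneg _, Real.sq_sqrt (hdisc x hx), hlam x hx⟩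
  -- lam satisfies the quadratic
  have hlamq : ∀ x ∈ Set.Ioo (0:ℝ) 1,
      x*(1 - x)*(lam x)^2 + (c - (a + b + 1)*x)*(lam x) - a*b = 0 := by
    intro x hx
    have hA := hApos x hx
    obtain ⟨s, hsnn, hs2, hsL⟩ := hsqrt x hx
    have hx0 : x ≠ 0 := ne_of_gt hx.1
    have hx1 : (1:ℝ) - x ≠ 0 := by have := hx.2; intro hh; linarith
    have hL : 2*(x*(1 - x))*(lam x) = (a + b + 1)*x - c + s := by
      rw [hsL]
      field_simp
    have h4 : 4*(x*(1-x))*(x*(1 - x)*(lam x)^2 + (c - (a + b + 1)*x)*(lam x) - a*b) = 0 := by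
      linear_combination (2*(x*(1-x))*(lam x) - ((a+b+1)*x - c) + s) * hL + hs2
    have h4A : (4*(x*(1-x)) : ℝ) ≠ 0 := by positivity
    exact (mul_eq_zero.mp h4).resolve_left h4A
  -- factorization of the ODE right-hand side
  have hid : ∀ x ∈ Set.Ioo (0:ℝ) 1, h' x =
      (lam x - h x) * (h x + lam x + (c - (a + b + 1)*x)/(x*(1 - x))) := by
    intro x hx
    have hA := hApos x hx
    have hq := hlamq x hx
    have hx0 : x ≠ 0 := ne_of_gt hx.1
    have hx1 : (1:ℝ) - x ≠ 0 := by have := hx.2; intro hh; linarith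
    rw [hode x hx]
    field_simp
    linear_combination -hq
  -- whenever h' > 0, we get h < lam
  have hlt : ∀ x ∈ Set.Ioo (0:ℝ) 1, 0 < h' x → h x < lam x := by
    intro x hx hpos
    have hA := hApos x hx
    obtain ⟨s, hsnn, hs2, hsL⟩ := hsqrt x hx
    have hx0 : x ≠ 0 := ne_of_gt hx.1
    have hx1 : (1:ℝ) - x ≠ 0 := by have := hx.2; intro hh; linarith
    have hQneg : x*(1 - x)*(h x)^2 + (c - (a + b + 1)*x)*(h x) - a*b < 0 := by
      have hAh : (x*(1-x)) * h' x =
          -(x*(1 - x)*(h x)^2 + (c - (a + b + 1)*x)*h x - a*b) := by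
        rw [hode x hx]
        field_simp
      nlinarith [mul_pos hA hpos]
    have hs2' : s^2 = (c - (a + b + 1)*x)^2 - 4*(x*(1-x))*(-(a*b)) := by
      rw [hs2]; ring
    have hQ' : (x*(1-x))*(h x)^2 + (c - (a + b + 1)*x)*(h x) + (-(a*b)) < 0 := by
      linarith [hQneg]
    have := quad_lt_root hA hsnn hs2' hQ'
    rw [hsL]
    calc h x < (-(c - (a + b + 1)*x) + s) / (2*(x*(1-x))) := this
      _ = ((a + b + 1)*x - c + s) / (2*x*(1 - x)) := by
          rw [show (2*(x*(1-x)) : ℝ) = 2*x*(1-x) by ring]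
          congr 1
          ring
  -- main claim : h' > 0 everywhere on (0,1)
  have key : ∀ x ∈ Set.Ioo (0:ℝ) 1, 0 < h' x := by
    by_contra hcon
    push_neg at hcon
    obtain ⟨z, hz, hzle⟩ := hcon
    obtain ⟨ε, hε, hεpos⟩ := hnear
    set S : Set ℝ := {x | x ∈ Set.Ioo (0:ℝ) 1 ∧ h' x ≤ 0} with hSdef
    have hSne : S.Nonempty := ⟨z, hz, hzle⟩
    have hSlb : ∀ s ∈ S, ε ≤ s := by
      intro s hs
      by_contra hltε
      push_neg at hltε
      exact absurd hs.2 (not_le.mpr (hεpos s ⟨hs.1.1, hltε⟩))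
    have hbdd : BddBelow S := ⟨ε, hSlb⟩
    set t := sInf S with htdef
    have htε : ε ≤ t := le_csInf hSne hSlb
    have htz : t ≤ z := csInf_le hbdd ⟨hz, hzle⟩
    have htI : t ∈ Set.Ioo (0:ℝ) 1 := ⟨lt_of_lt_of_le hε htε, lt_of_le_of_lt htz hz.2⟩
    have ht0 : (0:ℝ) < t := htI.1
    have hpos_lt : ∀ x, 0 < x → x < t → 0 < h' x := by
      intro x hx0 hxt
      by_contra hle
      push_neg at hle
      have hxS : x ∈ S := ⟨⟨hx0, lt_trans hxt htI.2⟩, hle⟩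
      exact absurd (csInf_le hbdd hxS) (not_le.mpr hxt)
    have hct : ContinuousAt h' t := hh'c t htI
    -- h' t = 0
    have hle0 : h' t ≤ 0 := by
      by_contra hgt
      push_neg at hgt
      have hev : ∀ᶠ y in nhds t, 0 < h' y := hct.eventually (eventually_gt_nhds hgt)
      obtain ⟨δ, hδpos, hδ⟩ := Metric.eventually_nhds_iff.mp hev
      obtain ⟨s, hsS, hslt⟩ := (csInf_lt_iff hbdd hSne).mp (lt_add_of_pos_right t hδpos)
      have hts : t ≤ s := csInf_le hbdd hsS
      have : dist s t < δ := by
        rw [Real.dist_eq, abs_of_nonneg (by linarith)]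
        linarith
      exact absurd hsS.2 (not_le.mpr (hδ this))
    have hge0 : 0 ≤ h' t := by
      have htendsto : Filter.Tendsto h' (nhdsWithin t (Set.Iio t)) (nhds (h' t)) :=
        hct.continuousWithinAt.tendsto
      apply ge_of_tendsto htendsto
      filter_upwards [Ioo_mem_nhdsLT_of_mem (⟨half_lt_self ht0, le_rfl⟩ : t ∈ Set.Ioc (t/2) t)]
        with y hy
      exact le_of_lt (hpos_lt y (lt_trans (half_pos ht0) hy.1) hy.2)
    have ht'0 : h' t = 0 := le_antisymm hle0 hge0
    -- h satisfies the quadratic at t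
    have hQt : t*(1 - t)*(h t)^2 + (c - (a + b + 1)*t)*(h t) - a*b = 0 := by
      have hE := hode t htI
      rw [ht'0] at hE
      have hA := hApos t htI
      have hAne : t * (1 - t) ≠ 0 := ne_of_gt hA
      have h1t : (1:ℝ) - t ≠ 0 := ne_of_gt (by linarith [htI.2])
      field_simp at hE
      linarith
    -- h is strictly monotone on (0, t]
    have hsub : Set.Ioc (0:ℝ) t ⊆ Set.Ioo 0 1 := fun y hy =>
      ⟨hy.1, lt_of_le_of_lt hy.2 htI.2⟩
    have hmh : StrictMonoOn h (Set.Ioc 0 t) := by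
      apply strictMonoOn_of_deriv_pos (convex_Ioc 0 t)
      · exact fun y hy => (hhc y (hsub hy)).continuousWithinAt
      · intro y hy
        rw [interior_Ioc] at hy
        rw [(hderiv y (hsub ⟨hy.1, le_of_lt hy.2⟩)).deriv]
        exact hpos_lt y hy.1 hy.2
    have hhtge : a*b/c ≤ h t := by
      apply le_of_tendsto hlim
      filter_upwards [Ioo_mem_nhdsGT_of_mem (⟨le_rfl, ht0⟩ : (0:ℝ) ∈ Set.Ico 0 t)] with y hy
      exact le_of_lt (hmh ⟨hy.1, le_of_lt hy.2⟩ ⟨ht0, le_rfl⟩ hy.2)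
    have hht0 : 0 < h t := lt_of_lt_of_le habc hhtge
    -- h t = lam t
    have hhtlam : h t = lam t := by
      have hA := hApos t htI
      obtain ⟨s, hsnn, hs2, hsL⟩ := hsqrt t htI
      have hs2' : s^2 = (c - (a + b + 1)*t)^2 - 4*(t*(1-t))*(-(a*b)) := by
        rw [hs2]; ring
      have hQ' : (t*(1-t))*(h t)^2 + (c - (a + b + 1)*t)*(h t) + (-(a*b)) = 0 := by
        linarith [hQt]
      have hCneg : (-(a*b) : ℝ) < 0 := by nlinarith
      have := quad_pos_root_eq hA hCneg hsnn hs2' hht0 hQ'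
      rw [hsL, this]
      rw [show (2*(t*(1-t)) : ℝ) = 2*t*(1-t) by ring]
      congr 1
      ring
    -- Gronwall-type contradiction on [t/2, t]
    have hKsub : Set.Icc (t/2) t ⊆ Set.Ioo 0 1 := fun y hy =>
      ⟨lt_of_lt_of_le (half_pos ht0) hy.1, lt_of_le_of_lt hy.2 htI.2⟩
    set W : ℝ → ℝ := fun x => h x + lam x + (c - (a + b + 1)*x)/(x*(1 - x)) with hWdef
    have hWc : ContinuousOn W (Set.Icc (t/2) t) := by
      have hlamc : ContinuousOn lam (Set.Icc (t/2) t) := by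
        apply ContinuousOn.congr (f := fun x =>
          ((a + b + 1)*x - c + Real.sqrt (((a + b + 1)*x - c)^2 + 4*a*b*x*(1 - x)))
            / (2*x*(1 - x)))
        · apply ContinuousOn.div
          · apply ContinuousOn.add (by fun_prop)
            exact Real.continuous_sqrt.comp_continuousOn (by fun_prop)
          · fun_prop
          · intro y hy
            have := hApos y (hKsub hy)
            intro hzero
            rw [show (2*y*(1-y) : ℝ) = 2*(y*(1-y)) by ring] at hzero
            nlinarith
        · intro y hy
          exact hlam y (hKsub hy)
      apply ContinuousOn.add
      · exact ContinuousOn.add (fun y hy => (hhc y (hKsub hy)).continuousWithinAt) hlamc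
      · apply ContinuousOn.div (by fun_prop) (by fun_prop)
        intro y hy
        exact ne_of_gt (hApos y (hKsub hy))
    obtain ⟨M, hM⟩ := (isCompact_Icc).exists_bound_of_continuousOn hWc
    have hMnn : 0 ≤ M := le_trans (norm_nonneg _) (hM t ⟨by linarith [half_lt_self ht0], le_rfl⟩)
    -- derivative bound on (t/2, t)
    have hbound : ∀ x ∈ Set.Ioo (t/2) t, h' x ≤ M * (h t - h x) := by
      intro x hx
      have hxI : x ∈ Set.Ioo (0:ℝ) 1 := hKsub ⟨le_of_lt hx.1, le_of_lt hx.2⟩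
      have hxK : x ∈ Set.Icc (t/2) t := ⟨le_of_lt hx.1, le_of_lt hx.2⟩
      have hpos := hpos_lt x hxI.1 hx.2
      have hlh : h x < lam x := hlt x hxI hpos
      have hWpos : 0 < W x := by
        show 0 < h x + lam x + (c - (a + b + 1)*x)/(x*(1 - x))
        by_contra hneg
        push_neg at hneg
        have hidx := hid x hxI
        nlinarith [hidx, hpos,
          mul_nonneg (sub_nonneg.mpr (le_of_lt hlh)) (neg_nonneg.mpr hneg)]
      have hWM : W x ≤ M := le_trans (le_abs_self _) (hM x hxK)
      have hlamle : lam x ≤ h t := by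
        rw [hhtlam]
        exact le_of_lt (hmono hxI htI hx.2)
      have hidx := hid x hxI
      calc h' x = (lam x - h x) * W x := hidx
        _ ≤ (h t - h x) * W x := by
            apply mul_le_mul_of_nonneg_right _ (le_of_lt hWpos)
            linarith
        _ ≤ (h t - h x) * M := by
            apply mul_le_mul_of_nonneg_left hWM
            linarith
        _ = M * (h t - h x) := by ring
    -- the auxiliary function g
    have hg : ∀ x ∈ Set.Ioo (0:ℝ) 1, HasDerivAt (fun x => (h t - h x) * Real.exp (M * x))
        ((-(h' x)) * Real.exp (M * x) + (h t - h x) * (Real.exp (M * x) * M)) x := by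
      intro x hx
      have h1 : HasDerivAt (fun y => h t - h y) (-(h' x)) x := (hderiv x hx).const_sub (h t)
      have h2 : HasDerivAt (fun y => Real.exp (M * y)) (Real.exp (M * x) * M) x := by
        have := ((hasDerivAt_id x).const_mul M).exp
        simpa using this
      exact h1.mul h2
    have hgmono : MonotoneOn (fun x => (h t - h x) * Real.exp (M * x))
        (Set.Icc (t/2) t) := by
      apply monotoneOn_of_deriv_nonneg (convex_Icc _ _)
      · apply ContinuousOn.mul
        · exact ContinuousOn.sub continuousOn_const
            (fun y hy => (hhc y (hKsub hy)).continuousWithinAt)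
        · fun_prop
      · intro x hx
        rw [interior_Icc] at hx
        exact (hg x (hKsub ⟨le_of_lt hx.1, le_of_lt hx.2⟩)).differentiableAt.differentiableWithinAt
      · intro x hx
        rw [interior_Icc] at hx
        rw [(hg x (hKsub ⟨le_of_lt hx.1, le_of_lt hx.2⟩)).deriv]
        have hb := hbound x hx
        have he : (0:ℝ) < Real.exp (M * x) := Real.exp_pos _
        nlinarith [hb, he]
    have hgt2 : (h t - h (t/2)) * Real.exp (M * (t/2)) ≤ (h t - h t) * Real.exp (M * t) :=
      hgmono ⟨le_rfl, le_of_lt (half_lt_self ht0)⟩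
        ⟨le_of_lt (half_lt_self ht0), le_rfl⟩ (le_of_lt (half_lt_self ht0))
    have hht2 : h (t/2) < h t :=
      hmh ⟨half_pos ht0, le_of_lt (half_lt_self ht0)⟩ ⟨ht0, le_rfl⟩ (half_lt_self ht0)
    have hgpos : 0 < (h t - h (t/2)) * Real.exp (M * (t/2)) :=
      mul_pos (by linarith) (Real.exp_pos _)
    have hzero : (h t - h t) * Real.exp (M * t) = 0 := by
      simp
    linarith [hgt2, hgpos, hzero]
  intro x hx
  exact ⟨hlt x hx (key x hx), key x hx⟩
end

section
/- For a, b, c > 0 with c > ab/(a+b+1) and x ∈ (0, 1), the two bounds of Theorem 6.3 are ordered: c − (a+b+1)x + √(((a+b+1)x − c)² + 4abx(1−x)) < c − 1 − (a+b−1)x + √(((a+b+3)x − (c+1))² + 4(a+1)(b+1)x(1−x)). -/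
set_option maxHeartbeats 1000000 in
theorem gauss_bounds_ordered (a b c x : ℝ) (ha : 0 < a) (hb : 0 < b) (hc : 0 < c)
    (hcab : a*b/(a + b + 1) < c) (hx0 : 0 < x) (hx1 : x < 1) :
    c - (a + b + 1)*x + Real.sqrt (((a + b + 1)*x - c)^2 + 4*a*b*x*(1 - x))
      < c - 1 - (a + b - 1)*x
        + Real.sqrt (((a + b + 3)*x - (c + 1))^2 + 4*(a + 1)*(b + 1)*x*(1 - x)) := by
  have hd : 0 < a + b + 1 := by linarith
  have h1 : a * b < c * (a + b + 1) := by rwa [div_lt_iff₀ hd] at hcab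
  have hx1x : 0 < x * (1 - x) := mul_pos hx0 (by linarith)
  have hS1pos : 0 < ((a + b + 1)*x - c)^2 + 4*a*b*x*(1 - x) := by
    nlinarith [sq_nonneg ((a+b+1)*x - c), mul_pos (mul_pos ha hb) hx1x]
  have hS2pos : 0 < ((a + b + 3)*x - (c + 1))^2 + 4*(a + 1)*(b + 1)*x*(1 - x) := by
    nlinarith [sq_nonneg ((a+b+3)*x - (c+1)),
      mul_pos (mul_pos (by linarith : (0:ℝ) < a+1) (by linarith : (0:ℝ) < b+1)) hx1x]
  set s1 := Real.sqrt (((a + b + 1)*x - c)^2 + 4*a*b*x*(1 - x)) with hs1def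
  have hs1sq : s1^2 = ((a + b + 1)*x - c)^2 + 4*a*b*x*(1 - x) := Real.sq_sqrt hS1pos.le
  have hs1n : 0 ≤ s1 := Real.sqrt_nonneg _
  have hs2pos : 0 < Real.sqrt (((a + b + 3)*x - (c + 1))^2 + 4*(a + 1)*(b + 1)*x*(1 - x)) :=
    Real.sqrt_pos.mpr hS2pos
  have hkey : s1 * (1 - 2*x) < ((a+b+1)*x - c)*(2*x - 1) + 2*(a+b+1)*x*(1-x) := by
    rcases le_or_gt (1 - 2*x) 0 with h | ht
    · have habs : c - (a+b+1)*x ≤ s1 := by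
        have h2 : |c - (a+b+1)*x| ≤ s1 := by
          rw [hs1def, ← Real.sqrt_sq_eq_abs]
          apply Real.sqrt_le_sqrt
          nlinarith [mul_pos (mul_pos ha hb) hx1x]
        linarith [le_abs_self (c - (a+b+1)*x)]
      have h3 := mul_le_mul_of_nonpos_right habs h
      nlinarith [mul_pos (mul_pos hd hx0) (by linarith : (0:ℝ) < 1 - x)]
    · have hN : 0 < (a+b+1)*x + c*(1 - 2*x) := by nlinarith
      have hbr : a*b*(1-2*x)^2 < ((a+b+1)*x)^2 + c*(a+b+1)*(1-2*x) := by
        nlinarith [mul_pos (mul_pos ha hb) (mul_pos ht (by linarith : (0:ℝ) < 1 - (1-2*x))),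
          mul_pos ht (sub_pos.mpr h1), sq_nonneg ((a+b+1)*x), mul_pos hd hx0]
      have hS1t : (((a + b + 1)*x - c)^2 + 4*a*b*x*(1 - x)) * (1-2*x)^2
          < ((a+b+1)*x + c*(1-2*x))^2 := by
        have hid : ((a+b+1)*x + c*(1-2*x))^2
            - (((a + b + 1)*x - c)^2 + 4*a*b*x*(1 - x)) * (1-2*x)^2
            = 4*(x*(1-x)*((((a+b+1)*x)^2 + c*(a+b+1)*(1-2*x)) - a*b*(1-2*x)^2)) := by
          ring
        linarith [mul_pos hx1x (sub_pos.mpr hbr), hid]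
      have hst : s1 * (1-2*x) < (a+b+1)*x + c*(1-2*x) := by
        have e : s1 * (1-2*x)
            = Real.sqrt (((((a + b + 1)*x - c)^2 + 4*a*b*x*(1 - x))) * (1-2*x)^2) := by
          rw [Real.sqrt_mul hS1pos.le, Real.sqrt_sq ht.le, hs1def]
        rw [e, Real.sqrt_lt' hN]
        exact hS1t
      nlinarith
  rcases le_or_gt (s1 + (1 - 2*x)) 0 with h | h
  · linarith
  · have hlt : s1 + (1 - 2*x)
        < Real.sqrt (((a + b + 3)*x - (c + 1))^2 + 4*(a + 1)*(b + 1)*x*(1 - x)) := by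
      rw [Real.lt_sqrt (by linarith)]
      nlinarith [hkey, hs1sq]
    linarith
end
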